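/- arXiv:1210.4018 — 3 statements merged into one kernel-verified Lean document; each statement's English description precedes it below -/
import Mathlib

section
/- Suppose v ∈ C¹(ℝ²) satisfies ∫_{ℝ²} |∇v|^p dx < ∞ for some p ∈ (1,2). Then limsup_{R→∞} R^{-2} ∫_{B_R(0)} |v| dx < ∞; in particular, for every β > 2, lim_{R→∞} R^{-β} ∫_{B_R(0)} |v| dx = 0. -/
/-!
In polar coordinates `∫_{B_R} |v| = ∫_{S¹} ∫₀^R r |v(rω)| dr dω`. Along each ray, for `r < R`,
`|v(rω)| ≤ sup_{B₁} |v| + ∫₁^R |∇v(sω)| ds`, hence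
`∫_{B_R} |v| ≤ R²/2 · (2π sup_{B₁} |v| + ∫_{|x| ≥ 1} |∇v(x)| / |x| dx)`.
The last integral is finite by Hölder's inequality, because `|x|⁻¹ ∈ L^q({|x| ≥ 1})` for the
conjugate exponent `q = p / (p - 1)`, which exceeds the dimension `2` exactly when `p < 2`.
-/

noncomputable section
open MeasureTheory Real Filter

/-- The plane `ℝ²` with the Euclidean norm. -/
abbrev Plane := EuclideanSpace ℝ (Fin 2)

open scoped ENNReal
open Set Metric Module

section Polar

variable {E : Type*} [NormedAddCommGroup E] [NormedSpace ℝ E] [FiniteDimensional ℝ E]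
  [Nontrivial E] [MeasurableSpace E] [BorelSpace E] (μ : Measure E) [μ.IsAddHaarMeasure]

theorem lintegral_eq_lintegral_toSphere_Ioi {f : E → ℝ≥0∞} (hf : Measurable f) :
    ∫⁻ x, f x ∂μ = ∫⁻ ω, (∫⁻ r in Ioi (0 : ℝ),
      ENNReal.ofReal (r ^ (finrank ℝ E - 1)) * f (r • (ω : E))) ∂μ.toSphere := by
  have hmg : Measurable fun p : sphere (0 : E) 1 × Ioi (0 : ℝ) => f (p.2.1 • p.1.1) :=
    hf.comp ((measurable_subtype_coe.comp measurable_snd).smul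
      (measurable_subtype_coe.comp measurable_fst))
  calc ∫⁻ x, f x ∂μ
      = ∫⁻ x : ({0}ᶜ : Set E), f x ∂(μ.comap Subtype.val) := by
        rw [lintegral_subtype_comap (measurableSet_singleton 0).compl,
          restrict_compl_singleton]
    _ = ∫⁻ p : sphere (0 : E) 1 × Ioi (0 : ℝ), f (p.2.1 • p.1.1)
          ∂(μ.toSphere.prod (.volumeIoiPow (finrank ℝ E - 1))) := by
        rw [← (μ.measurePreserving_homeomorphUnitSphereProd).lintegral_comp hmg]
        refine lintegral_congr fun x => ?_
        simp [smul_inv_smul₀ (norm_ne_zero_iff.2 x.2)]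
    _ = _ := by
        rw [lintegral_prod _ hmg.aemeasurable]
        refine lintegral_congr fun ω => ?_
        have hray : Measurable fun r : Ioi (0 : ℝ) => f (r.1 • (ω : E)) :=
          hf.comp (measurable_subtype_coe.smul_const _)
        rw [Measure.volumeIoiPow, lintegral_withDensity_eq_lintegral_mul _
          (measurable_subtype_coe.pow_const _).ennreal_ofReal hray,
          ← lintegral_subtype_comap measurableSet_Ioi
            (fun r : ℝ => ENNReal.ofReal (r ^ (finrank ℝ E - 1)) * f (r • (ω : E)))]
        rfl

theorem setLIntegral_div_norm_pow_eq_lintegral_toSphere_Ici {G : E → ℝ≥0∞} (hG : Measurable G) :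
    ∫⁻ x in {x : E | 1 ≤ ‖x‖}, G x / ‖x‖ₑ ^ (finrank ℝ E - 1) ∂μ =
      ∫⁻ ω, (∫⁻ r in Ici (1 : ℝ), G (r • (ω : E))) ∂μ.toSphere := by
  have hS : MeasurableSet {x : E | 1 ≤ ‖x‖} := measurableSet_le measurable_const measurable_norm
  have hmeas : Measurable fun x : E => G x / ‖x‖ₑ ^ (finrank ℝ E - 1) :=
    hG.div (measurable_enorm.pow_const _)
  rw [← lintegral_indicator hS, lintegral_eq_lintegral_toSphere_Ioi μ (hmeas.indicator hS)]
  refine lintegral_congr fun ω => ?_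
  rw [← inter_eq_left.2 (Ici_subset_Ioi.2 zero_lt_one), ← setLIntegral_indicator measurableSet_Ici]
  refine setLIntegral_congr_fun measurableSet_Ioi fun r (hr : 0 < r) => ?_
  have hnorm : ‖r • (ω : E)‖ = r := by simp [norm_smul, abs_of_pos hr]
  by_cases h1 : 1 ≤ r
  · rw [indicator_of_mem (by simpa [hnorm] using h1), indicator_of_mem (mem_Ici.2 h1),
      ← ofReal_norm, hnorm, ENNReal.ofReal_pow hr.le]
    exact ENNReal.mul_div_cancel (pow_ne_zero _ (ENNReal.ofReal_pos.2 hr).ne')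
      (ENNReal.pow_ne_top ENNReal.ofReal_ne_top)
  · rw [indicator_of_notMem (by simpa [hnorm] using h1), indicator_of_notMem (by simpa using h1),
      mul_zero]

theorem setLIntegral_ball_le_of_forall_smul_le {f : E → ℝ≥0∞} (hf : Measurable f) {R : ℝ}
    (hR : 0 ≤ R) {c : sphere (0 : E) 1 → ℝ≥0∞}
    (hc : ∀ ω : sphere (0 : E) 1, ∀ r ∈ Ioo 0 R, f (r • (ω : E)) ≤ c ω) :
    ∫⁻ x in ball 0 R, f x ∂μ ≤
      ENNReal.ofReal (R ^ finrank ℝ E / finrank ℝ E) * ∫⁻ ω, c ω ∂μ.toSphere := by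
  have hn : 0 < finrank ℝ E := finrank_pos
  have hradial : ∫⁻ r in Ioo 0 R, ENNReal.ofReal (r ^ (finrank ℝ E - 1)) =
      ENNReal.ofReal (R ^ finrank ℝ E / finrank ℝ E) := by
    rw [← ofReal_integral_eq_lintegral_ofReal, integral_Ioc_eq_integral_Ioo.symm,
      ← intervalIntegral.integral_of_le hR, integral_pow, Nat.sub_add_cancel hn,
      Nat.cast_pred hn, sub_add_cancel]
    · simp [Nat.pos_iff_ne_zero.1 hn]
    · exact (continuous_pow _).integrableOn_Ioc.mono_set Ioo_subset_Ioc_self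
    · exact (ae_restrict_mem measurableSet_Ioo).mono fun r hr => pow_nonneg hr.1.le _
  rw [← lintegral_indicator measurableSet_ball, lintegral_eq_lintegral_toSphere_Ioi μ
    (hf.indicator measurableSet_ball), ← lintegral_const_mul' _ _ ENNReal.ofReal_ne_top]
  refine lintegral_mono fun ω => ?_
  calc ∫⁻ r in Ioi 0, ENNReal.ofReal (r ^ (finrank ℝ E - 1)) * (ball 0 R).indicator f (r • (ω : E))
      ≤ ∫⁻ r in Ioi 0, (Ioo 0 R).indicator
          (fun r => ENNReal.ofReal (r ^ (finrank ℝ E - 1)) * c ω) r := by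
        refine setLIntegral_mono' measurableSet_Ioi fun r (hr : 0 < r) => ?_
        have hnorm : ‖r • (ω : E)‖ = r := by simp [norm_smul, abs_of_pos hr]
        by_cases hrR : r < R
        · rw [indicator_of_mem (by simpa [hnorm] using hrR),
            indicator_of_mem (show r ∈ Ioo 0 R from ⟨hr, hrR⟩)]
          exact mul_le_mul_right (hc ω r ⟨hr, hrR⟩) _
        · rw [indicator_of_notMem (by simpa [hnorm] using hrR), mul_zero]
          exact zero_le
    _ = (∫⁻ r in Ioo 0 R, ENNReal.ofReal (r ^ (finrank ℝ E - 1))) * c ω := by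
        rw [setLIntegral_indicator measurableSet_Ioo, inter_eq_left.2 Ioo_subset_Ioi_self,
          lintegral_mul_const _ (by fun_prop)]
    _ = _ := by rw [hradial]

end Polar

theorem enorm_apply_smul_sub_le {E F : Type*} [NormedAddCommGroup E] [NormedSpace ℝ E]
    [NormedAddCommGroup F] [NormedSpace ℝ F] {v : E → F} (hv : ContDiff ℝ 1 v) (w : E)
    {a b : ℝ} (hab : a ≤ b) :
    ‖v (b • w) - v (a • w)‖ₑ ≤ ‖w‖ₑ * ∫⁻ s in Icc a b, ‖fderiv ℝ v (s • w)‖ₑ := by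
  have hray : ContDiff ℝ 1 fun t : ℝ => v (t • w) := hv.comp (contDiff_id.smul contDiff_const)
  have hderiv : ∀ t : ℝ, deriv (fun t : ℝ => v (t • w)) t = fderiv ℝ v (t • w) w := fun t =>
    (((hv.differentiable one_ne_zero) _).hasFDerivAt.comp_hasDerivAt t
      ((hasDerivAt_id t).smul_const w)).deriv.trans (by simp)
  calc ‖v (b • w) - v (a • w)‖ₑ
      ≤ ∫⁻ s in Icc a b, ‖fderiv ℝ v (s • w) w‖ₑ := by
        simpa only [hderiv] using enorm_sub_le_lintegral_deriv_of_contDiffOn_Icc hray.contDiffOn hab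
    _ ≤ ∫⁻ s in Icc a b, ‖w‖ₑ * ‖fderiv ℝ v (s • w)‖ₑ :=
        lintegral_mono fun s => (ContinuousLinearMap.le_opENorm _ w).trans_eq (mul_comm _ _)
    _ = _ := lintegral_const_mul' _ _ enorm_ne_top

theorem enorm_apply_smul_le_add_lintegral {E F : Type*} [NormedAddCommGroup E] [NormedSpace ℝ E]
    [NormedAddCommGroup F] [NormedSpace ℝ F] {v : E → F} (hv : ContDiff ℝ 1 v) {A : ℝ≥0∞}
    (hA : ∀ x ∈ closedBall (0 : E) 1, ‖v x‖ₑ ≤ A) {ω : E} (hω : ‖ω‖ = 1) {r R : ℝ}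
    (hr : r ∈ Icc 0 R) :
    ‖v (r • ω)‖ₑ ≤ A + ∫⁻ s in Icc 1 R, ‖fderiv ℝ v (s • ω)‖ₑ := by
  rcases le_or_gt r 1 with hr1 | hr1
  · refine (hA _ ?_).trans le_self_add
    simpa [norm_smul, hω, abs_of_nonneg hr.1] using hr1
  calc ‖v (r • ω)‖ₑ = ‖v ((1 : ℝ) • ω) + (v (r • ω) - v ((1 : ℝ) • ω))‖ₑ := by
        rw [add_sub_cancel]
    _ ≤ ‖v ((1 : ℝ) • ω)‖ₑ + ‖ω‖ₑ * ∫⁻ s in Icc 1 r, ‖fderiv ℝ v (s • ω)‖ₑ :=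
        (enorm_add_le _ _).trans (by gcongr; exact enorm_apply_smul_sub_le hv ω hr1.le)
    _ ≤ A + ∫⁻ s in Icc 1 R, ‖fderiv ℝ v (s • ω)‖ₑ := by
        rw [show ‖ω‖ₑ = 1 by simp [← ofReal_norm, hω], one_mul, one_smul]
        gcongr
        · exact hA ω (by simp [hω])
        · exact hr.2

theorem lintegral_mul_lt_top_of_holderConjugate {α : Type*} [MeasurableSpace α] {μ : Measure α}
    {p q : ℝ} (hpq : p.HolderConjugate q) {f g : α → ℝ≥0∞} (hf : AEMeasurable f μ)
    (hg : AEMeasurable g μ) (hfp : ∫⁻ a, f a ^ p ∂μ < ⊤) (hgq : ∫⁻ a, g a ^ q ∂μ < ⊤) :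
    ∫⁻ a, f a * g a ∂μ < ⊤ :=
  (ENNReal.lintegral_mul_le_Lp_mul_Lq μ hpq hf hg).trans_lt <| ENNReal.mul_lt_top
    (ENNReal.rpow_lt_top_of_nonneg (by simp [hpq.nonneg]) hfp.ne)
    (ENNReal.rpow_lt_top_of_nonneg (by simp [hpq.symm.nonneg]) hgq.ne)

theorem setLIntegral_one_le_norm_enorm_rpow_neg_lt_top {E : Type*} [NormedAddCommGroup E]
    [NormedSpace ℝ E] [FiniteDimensional ℝ E] [MeasurableSpace E] [BorelSpace E]
    (μ : Measure E) [μ.IsAddHaarMeasure] {q : ℝ} (hq : (finrank ℝ E : ℝ) < q) :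
    ∫⁻ x in {x : E | 1 ≤ ‖x‖}, ‖x‖ₑ ^ (-q) ∂μ < ⊤ := by
  have hq0 : 0 < q := (Nat.cast_nonneg _).trans_lt hq
  have hS : MeasurableSet {x : E | 1 ≤ ‖x‖} := measurableSet_le measurable_const measurable_norm
  have hbound : ∀ x ∈ {x : E | 1 ≤ ‖x‖},
      ‖x‖ₑ ^ (-q) ≤ ENNReal.ofReal (2 ^ q) * ENNReal.ofReal ((1 + ‖x‖) ^ (-q)) := by
    intro x (hx : 1 ≤ ‖x‖)
    rw [← ofReal_norm, ENNReal.ofReal_rpow_of_pos (by linarith),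
      ← ENNReal.ofReal_mul (by positivity)]
    refine ENNReal.ofReal_le_ofReal ?_
    calc ‖x‖ ^ (-q) ≤ ((1 + ‖x‖) / 2) ^ (-q) :=
          rpow_le_rpow_of_nonpos (by positivity) (by linarith) (by linarith)
      _ = 2 ^ q * (1 + ‖x‖) ^ (-q) := by
          rw [div_rpow (by positivity) zero_le_two, rpow_neg zero_le_two, div_inv_eq_mul, mul_comm]
  calc ∫⁻ x in {x : E | 1 ≤ ‖x‖}, ‖x‖ₑ ^ (-q) ∂μ
      ≤ ∫⁻ x in {x : E | 1 ≤ ‖x‖}, ENNReal.ofReal (2 ^ q) * ENNReal.ofReal ((1 + ‖x‖) ^ (-q)) ∂μ :=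
        setLIntegral_mono' hS hbound
    _ ≤ ∫⁻ x, ENNReal.ofReal (2 ^ q) * ENNReal.ofReal ((1 + ‖x‖) ^ (-q)) ∂μ :=
        setLIntegral_le_lintegral _ _
    _ = ENNReal.ofReal (2 ^ q) * ∫⁻ x, ENNReal.ofReal ((1 + ‖x‖) ^ (-q)) ∂μ :=
        lintegral_const_mul' _ _ ENNReal.ofReal_ne_top
    _ < ⊤ := ENNReal.mul_lt_top ENNReal.ofReal_lt_top (finite_integral_one_add_norm hq)

theorem setLIntegral_one_le_norm_div_norm_lt_top {G : Plane → ℝ≥0∞} (hG : Measurable G) {p : ℝ}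
    (hp1 : 1 < p) (hp2 : p < 2) (hGp : ∫⁻ x, G x ^ p < ⊤) :
    ∫⁻ x in {x : Plane | 1 ≤ ‖x‖}, G x / ‖x‖ₑ < ⊤ := by
  have hpq := Real.HolderConjugate.conjExponent hp1
  have hq : (finrank ℝ Plane : ℝ) < p.conjExponent := by
    rw [finrank_euclideanSpace_fin, conjExponent, lt_div_iff₀ (by linarith)]
    push_cast; linarith
  simp_rw [div_eq_mul_inv]
  refine lintegral_mul_lt_top_of_holderConjugate hpq hG.aemeasurable
    measurable_enorm.inv.aemeasurable ((setLIntegral_le_lintegral _ _).trans_lt hGp) ?_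
  simpa only [ENNReal.inv_rpow, ← ENNReal.rpow_neg] using
    setLIntegral_one_le_norm_enorm_rpow_neg_lt_top volume hq

theorem setLIntegral_ball_enorm_le {F : Type*} [NormedAddCommGroup F] [NormedSpace ℝ F]
    {v : Plane → F} (hv : ContDiff ℝ 1 v) {A : ℝ≥0∞}
    (hA : ∀ x ∈ closedBall (0 : Plane) 1, ‖v x‖ₑ ≤ A) {R : ℝ} (hR : 1 ≤ R) :
    ∫⁻ x in ball 0 R, ‖v x‖ₑ ≤ ENNReal.ofReal (R ^ 2 / 2) *
      (A * (volume : Measure Plane).toSphere univ +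
        ∫⁻ x in {x : Plane | 1 ≤ ‖x‖}, ‖fderiv ℝ v x‖ₑ / ‖x‖ₑ) := by
  have hdim : finrank ℝ Plane = 2 := finrank_euclideanSpace_fin
  have hDv : Measurable fun x => ‖fderiv ℝ v x‖ₑ :=
    (hv.continuous_fderiv one_ne_zero).measurable.enorm
  have hball := setLIntegral_ball_le_of_forall_smul_le volume (f := fun x => ‖v x‖ₑ)
    hv.continuous.enorm.measurable (by linarith) fun ω r hr =>
      enorm_apply_smul_le_add_lintegral hv hA (norm_eq_of_mem_sphere ω) ⟨hr.1.le, hr.2.le⟩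
  have hradial := setLIntegral_div_norm_pow_eq_lintegral_toSphere_Ici volume hDv
  rw [hdim, Nat.cast_ofNat] at hball
  simp only [hdim, Nat.add_one_sub_one, pow_one] at hradial
  refine hball.trans (mul_le_mul_right ?_ _)
  rw [lintegral_add_left measurable_const, lintegral_const, hradial]
  gcongr with ω
  exact Icc_subset_Ici_self

theorem exists_integral_ball_norm_le_mul_sq {F : Type*} [NormedAddCommGroup F] [NormedSpace ℝ F]
    {v : Plane → F} (hv : ContDiff ℝ 1 v) {p : ℝ} (hp1 : 1 < p) (hp2 : p < 2)
    (henergy : ∫⁻ x, ‖fderiv ℝ v x‖ₑ ^ p < ⊤) :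
    ∃ C : ℝ, ∀ R : ℝ, 1 ≤ R → ∫ x in ball (0 : Plane) R, ‖v x‖ ≤ C * R ^ 2 := by
  obtain ⟨A, hA⟩ := (isCompact_closedBall (0 : Plane) 1).exists_bound_of_continuousOn
    hv.continuous.continuousOn
  have hA' : ∀ x ∈ closedBall (0 : Plane) 1, ‖v x‖ₑ ≤ ENNReal.ofReal A := fun x hx => by
    rw [← ofReal_norm]; exact ENNReal.ofReal_le_ofReal (hA x hx)
  set M := ENNReal.ofReal A * (volume : Measure Plane).toSphere univ +
    ∫⁻ x in {x : Plane | 1 ≤ ‖x‖}, ‖fderiv ℝ v x‖ₑ / ‖x‖ₑ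
  have hM : M ≠ ⊤ := ENNReal.add_ne_top.2 ⟨by finiteness,
    (setLIntegral_one_le_norm_div_norm_lt_top
      (hv.continuous_fderiv one_ne_zero).measurable.enorm hp1 hp2 henergy).ne⟩
  refine ⟨M.toReal / 2, fun R hR => ?_⟩
  rw [integral_norm_eq_lintegral_enorm hv.continuous.aestronglyMeasurable]
  calc (∫⁻ x in ball 0 R, ‖v x‖ₑ).toReal ≤ (ENNReal.ofReal (R ^ 2 / 2) * M).toReal :=
        ENNReal.toReal_mono (by finiteness) (setLIntegral_ball_enorm_le hv hA' hR)
    _ = M.toReal / 2 * R ^ 2 := by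
        rw [ENNReal.toReal_mul, ENNReal.toReal_ofReal (by positivity)]; ring

theorem tendsto_rpow_neg_mul_of_rpow_neg_mul_le {g : ℝ → ℝ} {α β C : ℝ} (hαβ : α < β)
    (hg0 : ∀ᶠ R in atTop, 0 ≤ g R) (hg : ∀ᶠ R in atTop, R ^ (-α) * g R ≤ C) :
    Tendsto (fun R => R ^ (-β) * g R) atTop (nhds 0) := by
  refine squeeze_zero' (g := fun R => C * R ^ (-(β - α))) ?_ ?_
    (by simpa only [mul_zero] using (tendsto_rpow_neg_atTop (sub_pos.2 hαβ)).const_mul C)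
  · filter_upwards [hg0, eventually_gt_atTop 0] with R hR0 hR
    exact mul_nonneg (rpow_nonneg hR.le _) hR0
  · filter_upwards [hg, eventually_gt_atTop 0] with R hRC hR
    calc R ^ (-β) * g R = R ^ (-(β - α)) * (R ^ (-α) * g R) := by
          rw [← mul_assoc, ← rpow_add hR]; ring_nf
      _ ≤ R ^ (-(β - α)) * C := mul_le_mul_of_nonneg_left hRC (rpow_nonneg hR.le _)
      _ = C * R ^ (-(β - α)) := mul_comm _ _

/-- if `v ∈ C¹(ℝ²)` and `∫_{ℝ²} |∇v|^p dx < ∞` for some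
`p ∈ (1,2)`, then `limsup_{R→∞} R^{-2} ∫_{B_R(0)} |v| dx < ∞`; in particular
`R^{-β} ∫_{B_R(0)} |v| dx → 0` as `R → ∞` for every `β > 2`. -/
theorem mean_growth_sub (p : ℝ) (hp1 : 1 < p) (hp2 : p < 2)
    (v : Plane → ℝ) (hv : ContDiff ℝ 1 v)
    (henergy : ∫⁻ x : Plane, ENNReal.ofReal (‖fderiv ℝ v x‖ ^ p) < ⊤) :
    (∃ C R₀ : ℝ, ∀ R : ℝ, R₀ ≤ R →
        R ^ (-(2 : ℝ)) * (∫ x in Metric.ball (0 : Plane) R, |v x|) ≤ C) ∧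
      ∀ β : ℝ, 2 < β →
        Tendsto (fun R : ℝ => R ^ (-β) * ∫ x in Metric.ball (0 : Plane) R, |v x|)
          atTop (nhds 0) := by
  have henergy' : ∫⁻ x, ‖fderiv ℝ v x‖ₑ ^ p < ⊤ := by
    simpa only [← ofReal_norm, ENNReal.ofReal_rpow_of_nonneg (norm_nonneg _) (by linarith : 0 ≤ p)]
      using henergy
  obtain ⟨C, hC⟩ := exists_integral_ball_norm_le_mul_sq hv hp1 hp2 henergy'
  have hbound : ∀ R : ℝ, 1 ≤ R → R ^ (-(2 : ℝ)) * ∫ x in ball (0 : Plane) R, |v x| ≤ C := by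
    intro R hR
    rw [rpow_neg (by linarith), rpow_two, inv_mul_le_iff₀ (by positivity), mul_comm]
    simpa only [Real.norm_eq_abs] using hC R hR
  refine ⟨⟨C, 1, hbound⟩, fun β hβ => tendsto_rpow_neg_mul_of_rpow_neg_mul_le hβ ?_
    (eventually_ge_atTop 1 |>.mono hbound)⟩
  exact Eventually.of_forall fun R => integral_nonneg fun x => abs_nonneg _
end
end

section
/- Suppose v ∈ C¹(ℝ²) satisfies ∫_{ℝ²} |∇v|^p dx < ∞ for some p ∈ (1,2). Then sup_{R ≥ 1} ∫_0^{2π} |v(R cos θ, R sin θ)|^p dθ < ∞. -/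
noncomputable section
open MeasureTheory Real

/-- The point of the plane with Cartesian coordinates `(a, b)`. -/
def pt (a b : ℝ) : Plane := WithLp.toLp 2 ![a, b]

/-!
Along each ray, the fundamental theorem of calculus gives
`|v(Rω)| ≤ |v(ω)| + ∫₁ᴿ |∇v(rω)| dr`, and Hölder's inequality with the weights `r^(1/p)`,
`r^(-1/p)` bounds the integral by `(∫₁^∞ |∇v(rω)|^p r dr)^(1/p) (∫₁^∞ r^(1-q) dr)^(1/q)`,
where `q = p/(p-1) > 2` because `p < 2`, so the second factor is finite. Raising to the power `p`
and integrating over `ω ∈ S¹`, polar coordinates turn the first factor into `∫_{ℝ²} |∇v|^p`,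
a bound independent of `R`.
-/

open Set
open scoped ENNReal

theorem measurePreserving_pt : MeasurePreserving (fun q : ℝ × ℝ => pt q.1 q.2) volume volume :=
  (EuclideanSpace.volume_preserving_symm_measurableEquiv_toLp (Fin 2)).symm.comp
    (volume_preserving_finTwoArrow ℝ).symm

theorem smul_pt (r a b : ℝ) : r • pt a b = pt (r * a) (r * b) := by
  ext i; fin_cases i <;> simp [pt]

theorem norm_pt_cos_sin (θ : ℝ) : ‖pt (cos θ) (sin θ)‖ = 1 := by
  simp [EuclideanSpace.norm_eq, pt, Fin.sum_univ_two]

theorem continuous_pt_cos_sin : Continuous fun θ : ℝ => pt (cos θ) (sin θ) :=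
  (PiLp.continuous_toLp 2 _).comp (by fun_prop)

theorem lintegral_plane_eq_lintegral_polar (F : Plane → ℝ≥0∞) (hF : Measurable F) :
    ∫⁻ x : Plane, F x =
      ∫⁻ θ in Ioc (-π) π, ∫⁻ r in Ioi 0, ENNReal.ofReal r * F (r • pt (cos θ) (sin θ)) := by
  calc ∫⁻ x : Plane, F x = ∫⁻ q : ℝ × ℝ, F (pt q.1 q.2) :=
        (measurePreserving_pt.lintegral_comp hF).symm
    _ = ∫⁻ q in Ioi 0 ×ˢ Ioo (-π) π, ENNReal.ofReal q.1 * F (q.1 • pt (cos q.2) (sin q.2)) := by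
        simp [← lintegral_comp_polarCoord_symm, polarCoord_target, polarCoord_symm_apply, smul_pt]
    _ = ∫⁻ θ in Ioo (-π) π, ∫⁻ r in Ioi 0, ENNReal.ofReal r * F (r • pt (cos θ) (sin θ)) := by
        rw [Measure.volume_eq_prod, ← Measure.prod_restrict, lintegral_prod_symm]
        exact ((ENNReal.measurable_ofReal.comp measurable_fst).mul (hF.comp
          (measurable_fst.smul (continuous_pt_cos_sin.measurable.comp measurable_snd)))).aemeasurable
    _ = _ := setLIntegral_congr Ioo_ae_eq_Ioc

theorem abs_apply_smul_le_add_integral {E : Type*} [NormedAddCommGroup E] [NormedSpace ℝ E]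
    {v : E → ℝ} (hv : ContDiff ℝ 1 v) {w : E} (hw : ‖w‖ = 1) {R : ℝ} (hR : 1 ≤ R) :
    |v (R • w)| ≤ |v w| + ∫ r in (1 : ℝ)..R, ‖fderiv ℝ v (r • w)‖ := by
  have hray : Continuous fun r : ℝ => fderiv ℝ v (r • w) :=
    (hv.continuous_fderiv one_ne_zero).comp (continuous_id.smul continuous_const)
  have hderiv (r : ℝ) : HasDerivAt (fun r : ℝ => v (r • w)) (fderiv ℝ v (r • w) w) r := by
    have hline : HasDerivAt (fun r : ℝ => r • w) w r := by
      simpa using (hasDerivAt_id r).smul_const w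
    exact ((hv.differentiable one_ne_zero) (r • w)).hasFDerivAt.comp_hasDerivAt r hline
  have hftc : v (R • w) - v w = ∫ r in (1 : ℝ)..R, fderiv ℝ v (r • w) w := by
    rw [intervalIntegral.integral_eq_sub_of_hasDerivAt (fun r _ => hderiv r)
      ((hray.clm_apply continuous_const).intervalIntegrable _ _), one_smul]
  have hint : ‖∫ r in (1 : ℝ)..R, fderiv ℝ v (r • w) w‖ ≤ ∫ r in (1 : ℝ)..R, ‖fderiv ℝ v (r • w)‖ :=
    intervalIntegral.norm_integral_le_of_norm_le (f := fun r => fderiv ℝ v (r • w) w) hR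
      (Filter.Eventually.of_forall fun r _ => by
        simpa [hw] using (fderiv ℝ v (r • w)).le_opNorm w)
      (hray.norm.intervalIntegrable _ _)
  calc |v (R • w)| = |v w + (v (R • w) - v w)| := by ring_nf
    _ ≤ |v w| + |v (R • w) - v w| := abs_add_le _ _
    _ ≤ _ := by rw [hftc]; gcongr; exact hint

theorem ofReal_intervalIntegral_rpow_le {p q : ℝ} (hpq : p.HolderConjugate q) {D : ℝ → ℝ}
    (hD : Continuous D) (hD0 : 0 ≤ D) {R : ℝ} (hR : 1 ≤ R) :
    ENNReal.ofReal (∫ r in (1 : ℝ)..R, D r) ^ p ≤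
      (∫⁻ r in Ioi 1, ENNReal.ofReal (r ^ (1 - q))) ^ (p - 1) *
        ∫⁻ r in Ioi 1, ENNReal.ofReal r * ENNReal.ofReal (D r ^ p) := by
  have hp := hpq.pos
  have hq := hpq.symm.pos
  set f : ℝ → ℝ≥0∞ := fun r => ENNReal.ofReal (D r * r ^ p⁻¹)
  set g : ℝ → ℝ≥0∞ := fun r => ENNReal.ofReal (r ^ (-p⁻¹))
  have hholder : ∫⁻ r in Ioc 1 R, ENNReal.ofReal (D r) ≤
      (∫⁻ r in Ioi 1, ENNReal.ofReal r * ENNReal.ofReal (D r ^ p)) ^ (1 / p) *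
        (∫⁻ r in Ioi 1, ENNReal.ofReal (r ^ (1 - q))) ^ (1 / q) := calc
    ∫⁻ r in Ioc 1 R, ENNReal.ofReal (D r) = ∫⁻ r in Ioc 1 R, (f * g) r := by
      refine setLIntegral_congr_fun measurableSet_Ioc fun r hr => ?_
      have hr : 0 < r := one_pos.trans hr.1
      rw [Pi.mul_apply, ← ENNReal.ofReal_mul (mul_nonneg (hD0 r) (by positivity)), mul_assoc,
        ← rpow_add hr, add_neg_cancel, rpow_zero, mul_one]
    _ ≤ (∫⁻ r in Ioc 1 R, f r ^ p) ^ (1 / p) * (∫⁻ r in Ioc 1 R, g r ^ q) ^ (1 / q) :=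
      ENNReal.lintegral_mul_le_Lp_mul_Lq _ hpq (by fun_prop) (by fun_prop)
    _ ≤ _ := by
      gcongr ?_ ^ _ * ?_ ^ _
      · refine (setLIntegral_congr_fun measurableSet_Ioc fun r hr => ?_).trans_le
          (lintegral_mono_set Ioc_subset_Ioi_self)
        have hr : 0 < r := one_pos.trans hr.1
        rw [ENNReal.ofReal_rpow_of_nonneg (mul_nonneg (hD0 r) (by positivity)) hp.le,
          ← ENNReal.ofReal_mul hr.le, mul_rpow (hD0 r) (by positivity),
          ← rpow_mul hr.le, inv_mul_cancel₀ hp.ne', rpow_one, mul_comm]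
      · refine (setLIntegral_congr_fun measurableSet_Ioc fun r hr => ?_).trans_le
          (lintegral_mono_set Ioc_subset_Ioi_self)
        have hr : 0 < r := one_pos.trans hr.1
        rw [ENNReal.ofReal_rpow_of_nonneg (by positivity) hq.le, ← rpow_mul hr.le]
        congr 2
        have := hpq.symm.sub_one_mul_conj
        field_simp
        linarith
  have hlintegral :
      ENNReal.ofReal (∫ r in (1 : ℝ)..R, D r) = ∫⁻ r in Ioc 1 R, ENNReal.ofReal (D r) := by
    rw [intervalIntegral.integral_of_le hR,
      ofReal_integral_eq_lintegral_ofReal hD.integrableOn_Ioc (ae_of_all _ hD0)]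
  rw [hlintegral]
  refine (ENNReal.rpow_le_rpow hholder hp.le).trans_eq ?_
  rw [ENNReal.mul_rpow_of_nonneg _ _ hp.le, ← ENNReal.rpow_mul, ← ENNReal.rpow_mul,
    one_div_mul_cancel hp.ne', ENNReal.rpow_one, one_div_mul_eq_div, hpq.div_conj_eq_sub_one,
    mul_comm]

theorem ofReal_abs_apply_smul_rpow_le {E : Type*} [NormedAddCommGroup E] [NormedSpace ℝ E]
    {p q : ℝ} (hpq : p.HolderConjugate q) {v : E → ℝ} (hv : ContDiff ℝ 1 v) {w : E}
    (hw : ‖w‖ = 1) {R : ℝ} (hR : 1 ≤ R) :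
    ENNReal.ofReal (|v (R • w)| ^ p) ≤ 2 ^ (p - 1) * (ENNReal.ofReal (|v w| ^ p) +
      (∫⁻ r in Ioi 1, ENNReal.ofReal (r ^ (1 - q))) ^ (p - 1) *
        ∫⁻ r in Ioi 1, ENNReal.ofReal r * ENNReal.ofReal (‖fderiv ℝ v (r • w)‖ ^ p)) := by
  have hp := hpq.pos
  set S := ∫ r in (1 : ℝ)..R, ‖fderiv ℝ v (r • w)‖
  have hS : 0 ≤ S := intervalIntegral.integral_nonneg hR fun r _ => norm_nonneg _
  calc ENNReal.ofReal (|v (R • w)| ^ p) = ENNReal.ofReal |v (R • w)| ^ p :=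
        (ENNReal.ofReal_rpow_of_nonneg (abs_nonneg _) hp.le).symm
    _ ≤ (ENNReal.ofReal |v w| + ENNReal.ofReal S) ^ p := by
        rw [← ENNReal.ofReal_add (abs_nonneg _) hS]
        gcongr
        exact abs_apply_smul_le_add_integral hv hw hR
    _ ≤ 2 ^ (p - 1) * (ENNReal.ofReal |v w| ^ p + ENNReal.ofReal S ^ p) :=
        ENNReal.rpow_add_le_mul_rpow_add_rpow _ _ hpq.lt.le
    _ ≤ _ := by
        rw [ENNReal.ofReal_rpow_of_nonneg (abs_nonneg _) hp.le]
        gcongr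
        exact ofReal_intervalIntegral_rpow_le hpq
          ((hv.continuous_fderiv one_ne_zero).comp (continuous_id.smul continuous_const)).norm
          (fun r => norm_nonneg _) hR

theorem intervalIntegral_zero_two_pi_eq_toReal_lintegral {g : ℝ → ℝ} (hg : Continuous g)
    (hper : Function.Periodic g (2 * π)) (hg0 : 0 ≤ g) :
    ∫ θ in (0 : ℝ)..2 * π, g θ = (∫⁻ θ in Ioc (-π) π, ENNReal.ofReal (g θ)).toReal := by
  have hshift : ∫ θ in (0 : ℝ)..2 * π, g θ = ∫ θ in -π..π, g θ := by
    simpa [two_mul] using hper.intervalIntegral_add_eq 0 (-π)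
  rw [hshift, intervalIntegral.integral_of_le (by linarith [pi_pos]),
    integral_eq_lintegral_of_nonneg_ae (ae_of_all _ hg0) hg.aestronglyMeasurable]

theorem lintegral_circle_rpow_le {p q : ℝ} (hpq : p.HolderConjugate q) {v : Plane → ℝ}
    (hv : ContDiff ℝ 1 v) {R : ℝ} (hR : 1 ≤ R) :
    ∫⁻ θ in Ioc (-π) π, ENNReal.ofReal (|v (R • pt (cos θ) (sin θ))| ^ p) ≤
      2 ^ (p - 1) * ((∫⁻ θ in Ioc (-π) π, ENNReal.ofReal (|v (pt (cos θ) (sin θ))| ^ p)) +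
        (∫⁻ r in Ioi 1, ENNReal.ofReal (r ^ (1 - q))) ^ (p - 1) *
          ∫⁻ x, ENNReal.ofReal (‖fderiv ℝ v x‖ ^ p)) := by
  set K := ∫⁻ r in Ioi (1 : ℝ), ENNReal.ofReal (r ^ (1 - q))
  set F : Plane → ℝ≥0∞ := fun x => ENNReal.ofReal (‖fderiv ℝ v x‖ ^ p)
  have hvc := hv.continuous
  have hu := continuous_pt_cos_sin.measurable
  have hF : Measurable F := by
    have := hv.continuous_fderiv one_ne_zero
    fun_prop
  calc ∫⁻ θ in Ioc (-π) π, ENNReal.ofReal (|v (R • pt (cos θ) (sin θ))| ^ p)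
      ≤ ∫⁻ θ in Ioc (-π) π, 2 ^ (p - 1) * (ENNReal.ofReal (|v (pt (cos θ) (sin θ))| ^ p) +
          K ^ (p - 1) * ∫⁻ r in Ioi 1, ENNReal.ofReal r * F (r • pt (cos θ) (sin θ))) :=
        lintegral_mono fun θ => ofReal_abs_apply_smul_rpow_le hpq hv (norm_pt_cos_sin θ) hR
    _ = 2 ^ (p - 1) * ((∫⁻ θ in Ioc (-π) π, ENNReal.ofReal (|v (pt (cos θ) (sin θ))| ^ p)) +
          K ^ (p - 1) * ∫⁻ θ in Ioc (-π) π, ∫⁻ r in Ioi 1,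
            ENNReal.ofReal r * F (r • pt (cos θ) (sin θ))) := by
        rw [lintegral_const_mul' _ _ (by finiteness), lintegral_add_left (by fun_prop),
          lintegral_const_mul _ (Measurable.lintegral_prod_right
            ((ENNReal.measurable_ofReal.comp measurable_snd).mul
              (hF.comp (measurable_snd.smul (hu.comp measurable_fst)))))]
    _ ≤ _ := by
        rw [lintegral_plane_eq_lintegral_polar F hF]
        gcongr
        exact zero_le_one

/-- if `v ∈ C¹(ℝ²)` and `∫_{ℝ²} |∇v|^p dx < ∞` for some
`p ∈ (1,2)`, then `sup_{R ≥ 1} ∫_0^{2π} |v(R cos θ, R sin θ)|^p dθ < ∞`. -/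
theorem circle_integral_bound_sub (p : ℝ) (hp1 : 1 < p) (hp2 : p < 2)
    (v : Plane → ℝ) (hv : ContDiff ℝ 1 v)
    (henergy : ∫⁻ x : Plane, ENNReal.ofReal (‖fderiv ℝ v x‖ ^ p) < ⊤) :
    ∃ C : ℝ, ∀ R : ℝ, 1 ≤ R →
      (∫ θ in (0 : ℝ)..(2 * π), |v (pt (R * Real.cos θ) (R * Real.sin θ))| ^ p)
        ≤ C := by
  obtain ⟨q, hpq⟩ : ∃ q, p.HolderConjugate q := ⟨_, .conjExponent hp1⟩
  have hq : 2 < q := by nlinarith [hpq.sub_one_mul_conj]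
  have hK : ∫⁻ r in Ioi (1 : ℝ), ENNReal.ofReal (r ^ (1 - q)) ≠ ∞ :=
    (integrableOn_Ioi_rpow_of_lt (by linarith) one_pos).lintegral_lt_top.ne
  have hcircle (R : ℝ) : Continuous fun θ => |v (R • pt (cos θ) (sin θ))| ^ p :=
    (hv.continuous.comp (continuous_pt_cos_sin.const_smul R)).abs.rpow_const
      fun _ => .inr hpq.pos.le
  have hA : ∫⁻ θ in Ioc (-π) π, ENNReal.ofReal (|v (pt (cos θ) (sin θ))| ^ p) ≠ ∞ := by
    simpa using (hcircle 1).integrableOn_Ioc.lintegral_lt_top.ne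
  refine ⟨(2 ^ (p - 1) * ((∫⁻ θ in Ioc (-π) π, ENNReal.ofReal (|v (pt (cos θ) (sin θ))| ^ p)) +
    (∫⁻ r in Ioi 1, ENNReal.ofReal (r ^ (1 - q))) ^ (p - 1) *
      ∫⁻ x, ENNReal.ofReal (‖fderiv ℝ v x‖ ^ p))).toReal, fun R hR => ?_⟩
  simp_rw [← smul_pt]
  rw [intervalIntegral_zero_two_pi_eq_toReal_lintegral (hcircle R)
    (fun θ => by simp only [cos_add_two_pi, sin_add_two_pi]) (fun _ => by positivity)]
  exact ENNReal.toReal_mono (by finiteness) (lintegral_circle_rpow_le hpq hv hR)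
end
end

section
/- Suppose v ∈ C¹(ℝ²) satisfies ∫_{ℝ²} |∇v|^p dx < ∞ for some p ∈ (2,∞). Then limsup_{R→∞} R^{-(3 - 2/p)} ∫_{B_R(0)} |v| dx < ∞. -/
/-!
Along the segment from `0` to `x`, `|v x - v 0| ≤ |x| ∫₀¹ |∇v(t x)| dt`. Integrate over `B_R` and
exchange the integrals. By Hölder on `B_R` and the substitution `y = t x`, the inner integral
`∫_{B_R} |∇v(t x)| dx` is at most `t^(-d/p) R^(d(1-1/p)) |B_1|^(1-1/p) ‖∇v‖_p` in dimension `d`.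
The weight `t^(-d/p)` is integrable on `(0, 1]` precisely because `p > d`, and with `|x| < R`
this gives `∫_{B_R} |v| = O(R^(1 + d(1-1/p)))`, i.e. `O(R^(3-2/p))` in the plane.
-/

noncomputable section
open MeasureTheory Real

open Metric Set Module
open scoped ENNReal

section Segment

variable {E F : Type*} [NormedAddCommGroup E] [NormedSpace ℝ E]
  [NormedAddCommGroup F] [NormedSpace ℝ F] [CompleteSpace F]

theorem enorm_sub_le_mul_lintegral_fderiv_smul {v : E → F} (hv : ContDiff ℝ 1 v) (x : E) :
    ‖v x - v 0‖ₑ ≤ ‖x‖ₑ * ∫⁻ t in Ioc (0 : ℝ) 1, ‖fderiv ℝ v (t • x)‖ₑ := by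
  have hpath : Continuous fun t : ℝ => t • x := continuous_id.smul continuous_const
  have hcont : Continuous fun t : ℝ => fderiv ℝ v (t • x) x :=
    ((hv.continuous_fderiv one_ne_zero).comp hpath).clm_apply continuous_const
  have hftc : ∫ t in (0 : ℝ)..1, fderiv ℝ v (t • x) x = v x - v 0 := by
    have := intervalIntegral.integral_eq_sub_of_hasDerivAt (f := fun s : ℝ => v (s • x))
      (a := 0) (b := 1) (fun t _ => ?_) (hcont.intervalIntegrable 0 1)
    · simpa using this
    · exact ((hv.differentiable one_ne_zero) (t • x)).hasFDerivAt.comp_hasDerivAt t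
        (by simpa using (hasDerivAt_id t).smul_const x)
  calc ‖v x - v 0‖ₑ = ‖∫ t in Ioc (0 : ℝ) 1, fderiv ℝ v (t • x) x‖ₑ := by
        rw [← hftc, intervalIntegral.integral_of_le zero_le_one]
    _ ≤ ∫⁻ t in Ioc (0 : ℝ) 1, ‖fderiv ℝ v (t • x) x‖ₑ := enorm_integral_le_lintegral_enorm _
    _ ≤ ∫⁻ t in Ioc (0 : ℝ) 1, ‖x‖ₑ * ‖fderiv ℝ v (t • x)‖ₑ :=
        lintegral_mono fun t => (ContinuousLinearMap.le_opENorm _ _).trans_eq (mul_comm _ _)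
    _ = ‖x‖ₑ * ∫⁻ t in Ioc (0 : ℝ) 1, ‖fderiv ℝ v (t • x)‖ₑ :=
        lintegral_const_mul' _ _ enorm_ne_top

end Segment

theorem setLIntegral_le_lintegral_rpow_mul_measure {α : Type*} [MeasurableSpace α]
    {μ : Measure α} {f : α → ℝ≥0∞} (hf : AEMeasurable f μ) (s : Set α) {p : ℝ} (hp : 1 ≤ p) :
    ∫⁻ x in s, f x ∂μ ≤ (∫⁻ x in s, f x ^ p ∂μ) ^ (1 / p) * μ s ^ (1 - 1 / p) := by
  have := eLpNorm'_le_eLpNorm'_mul_rpow_measure_univ one_pos hp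
    hf.restrict.aestronglyMeasurable (μ := μ.restrict s)
  simpa [eLpNorm'_eq_lintegral_enorm] using this

theorem lintegral_Ioc_rpow_neg_ne_top {a : ℝ} (ha : a < 1) :
    ∫⁻ t in Ioc (0 : ℝ) 1, ENNReal.ofReal t ^ (-a) ≠ ⊤ := by
  have hint := intervalIntegral.intervalIntegrable_rpow' (a := 0) (b := 1) (r := -a) (by linarith)
  rw [intervalIntegrable_iff_integrableOn_Ioc_of_le zero_le_one] at hint
  refine ne_top_of_le_ne_top hint.2.ne (setLIntegral_mono' measurableSet_Ioc fun t ht => ?_)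
  rw [Real.enorm_eq_ofReal (Real.rpow_nonneg ht.1.le _), ENNReal.ofReal_rpow_of_pos ht.1]

section Haar

variable {E : Type*} [NormedAddCommGroup E] [NormedSpace ℝ E] [MeasurableSpace E] [BorelSpace E]
  [FiniteDimensional ℝ E] (μ : Measure E) [μ.IsAddHaarMeasure]

theorem lintegral_comp_smul_of_pos (g : E → ℝ≥0∞) {t : ℝ} (ht : 0 < t) :
    ∫⁻ x, g (t • x) ∂μ = ENNReal.ofReal t ^ (-(finrank ℝ E : ℝ)) * ∫⁻ x, g x ∂μ := by
  calc ∫⁻ x, g (t • x) ∂μ = ∫⁻ y, g y ∂(μ.map (t • ·)) :=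
        (lintegral_map_equiv g
          (Homeomorph.smul (isUnit_iff_ne_zero.2 ht.ne').unit).toMeasurableEquiv).symm
    _ = ENNReal.ofReal t ^ (-(finrank ℝ E : ℝ)) * ∫⁻ x, g x ∂μ := by
        rw [Measure.map_addHaar_smul μ ht.ne', lintegral_smul_measure, smul_eq_mul,
          abs_of_pos (by positivity), ENNReal.ofReal_inv_of_pos (by positivity),
          ENNReal.ofReal_pow ht.le, ENNReal.rpow_neg, ENNReal.rpow_natCast]

theorem setLIntegral_ball_comp_smul_le [Nontrivial E] {g : E → ℝ≥0∞} (hg : Measurable g)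
    {p : ℝ} (hp : 1 ≤ p) {t R : ℝ} (ht : 0 < t) (hR : 0 ≤ R) :
    ∫⁻ x in ball 0 R, g (t • x) ∂μ ≤
      ENNReal.ofReal t ^ (-(finrank ℝ E / p)) * ENNReal.ofReal R ^ (finrank ℝ E * (1 - 1 / p)) *
        μ (ball 0 1) ^ (1 - 1 / p) * (∫⁻ x, g x ^ p ∂μ) ^ (1 / p) := by
  have hp0 : 0 ≤ 1 / p := by positivity
  have hp1 : 0 ≤ 1 - 1 / p := sub_nonneg.2 ((div_le_one (by linarith)).2 hp)
  calc ∫⁻ x in ball 0 R, g (t • x) ∂μ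
      ≤ (∫⁻ x in ball 0 R, g (t • x) ^ p ∂μ) ^ (1 / p) * μ (ball 0 R) ^ (1 - 1 / p) :=
        setLIntegral_le_lintegral_rpow_mul_measure
          (hg.comp (measurable_const_smul t)).aemeasurable _ hp
    _ ≤ (∫⁻ x, g (t • x) ^ p ∂μ) ^ (1 / p) * μ (ball 0 R) ^ (1 - 1 / p) := by
        gcongr
        exact Measure.restrict_le_self
    _ = (ENNReal.ofReal t ^ (-(finrank ℝ E : ℝ)) * ∫⁻ x, g x ^ p ∂μ) ^ (1 / p) *
          (ENNReal.ofReal R ^ (finrank ℝ E : ℝ) * μ (ball 0 1)) ^ (1 - 1 / p) := by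
        rw [lintegral_comp_smul_of_pos μ (fun y => g y ^ p) ht, Measure.addHaar_ball μ 0 hR,
          ENNReal.ofReal_pow hR, ENNReal.rpow_natCast]
    _ = _ := by
        rw [ENNReal.mul_rpow_of_nonneg _ _ hp0, ENNReal.mul_rpow_of_nonneg _ _ hp1,
          ← ENNReal.rpow_mul, ← ENNReal.rpow_mul, neg_mul, ← div_eq_mul_one_div]
        ring

variable {F : Type*} [NormedAddCommGroup F] [NormedSpace ℝ F] [CompleteSpace F]

theorem setLIntegral_ball_enorm_sub_le [Nontrivial E] {p : ℝ} (hp : 1 ≤ p) {v : E → F}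
    (hv : ContDiff ℝ 1 v) {R : ℝ} (hR : 0 ≤ R) :
    ∫⁻ x in ball 0 R, ‖v x - v 0‖ₑ ∂μ ≤
      (∫⁻ t in Ioc (0 : ℝ) 1, ENNReal.ofReal t ^ (-(finrank ℝ E / p))) *
        μ (ball 0 1) ^ (1 - 1 / p) * (∫⁻ x, ‖fderiv ℝ v x‖ₑ ^ p ∂μ) ^ (1 / p) *
          ENNReal.ofReal R ^ (1 + finrank ℝ E * (1 - 1 / p)) := by
  set d : ℝ := (finrank ℝ E : ℝ)
  set K := μ (ball 0 1) ^ (1 - 1 / p) * (∫⁻ x, ‖fderiv ℝ v x‖ₑ ^ p ∂μ) ^ (1 / p)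
  have hdv : Continuous (fderiv ℝ v) := hv.continuous_fderiv one_ne_zero
  have hd : 0 ≤ d * (1 - 1 / p) :=
    mul_nonneg (Nat.cast_nonneg _) (sub_nonneg.2 ((div_le_one (by linarith)).2 hp))
  have hjoint : AEMeasurable (Function.uncurry fun (x : E) (t : ℝ) => ‖fderiv ℝ v (t • x)‖ₑ)
      ((μ.restrict (ball 0 R)).prod (volume.restrict (Ioc 0 1))) :=
    (hdv.comp (continuous_snd.smul continuous_fst)).enorm.aemeasurable
  calc ∫⁻ x in ball 0 R, ‖v x - v 0‖ₑ ∂μ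
      ≤ ∫⁻ x in ball 0 R,
          ENNReal.ofReal R * (∫⁻ t in Ioc (0 : ℝ) 1, ‖fderiv ℝ v (t • x)‖ₑ) ∂μ := by
        refine setLIntegral_mono' measurableSet_ball fun x hx => ?_
        refine (enorm_sub_le_mul_lintegral_fderiv_smul hv x).trans ?_
        gcongr
        rw [← ofReal_norm]
        exact ENNReal.ofReal_le_ofReal (mem_ball_zero_iff.1 hx).le
    _ = ENNReal.ofReal R * ∫⁻ t in Ioc (0 : ℝ) 1, ∫⁻ x in ball 0 R, ‖fderiv ℝ v (t • x)‖ₑ ∂μ := by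
        rw [lintegral_const_mul' _ _ ENNReal.ofReal_ne_top, lintegral_lintegral_swap hjoint]
    _ ≤ ENNReal.ofReal R * ∫⁻ t in Ioc (0 : ℝ) 1,
          ENNReal.ofReal t ^ (-(d / p)) * (ENNReal.ofReal R ^ (d * (1 - 1 / p)) * K) := by
        refine mul_le_mul_right (setLIntegral_mono' measurableSet_Ioc fun t ht => ?_) _
        simpa only [K, mul_assoc] using
          setLIntegral_ball_comp_smul_le μ hdv.enorm.measurable hp ht.1 hR
    _ = _ := by
        rw [lintegral_mul_const _ (ENNReal.measurable_ofReal.pow_const _),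
          ENNReal.rpow_add_of_nonneg _ _ zero_le_one hd, ENNReal.rpow_one]
        ring

theorem exists_integral_ball_norm_le_mul_rpow [Nontrivial E] {p : ℝ}
    (hp : (finrank ℝ E : ℝ) < p) {v : E → F} (hv : ContDiff ℝ 1 v)
    (henergy : ∫⁻ x, ‖fderiv ℝ v x‖ₑ ^ p ∂μ ≠ ⊤) :
    ∃ C, ∀ R, 1 ≤ R →
      ∫ x in ball 0 R, ‖v x‖ ∂μ ≤ C * R ^ (1 + finrank ℝ E * (1 - 1 / p)) := by
  set d : ℝ := (finrank ℝ E : ℝ)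
  set s := 1 + d * (1 - 1 / p)
  have hd : 1 ≤ d := Nat.one_le_cast.2 finrank_pos
  have hp0 : 0 < p := by linarith
  have hp1 : 0 ≤ 1 - 1 / p := sub_nonneg.2 ((div_le_one hp0).2 (by linarith))
  have hds : d ≤ s := by
    have : d / p < 1 := (div_lt_one hp0).2 hp
    simp only [s, mul_sub, mul_one, ← div_eq_mul_one_div]
    linarith
  set K := (∫⁻ t in Ioc (0 : ℝ) 1, ENNReal.ofReal t ^ (-(d / p))) *
    μ (ball 0 1) ^ (1 - 1 / p) * (∫⁻ x, ‖fderiv ℝ v x‖ₑ ^ p ∂μ) ^ (1 / p)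
  have hK : K ≠ ⊤ :=
    ENNReal.mul_ne_top (ENNReal.mul_ne_top
      (lintegral_Ioc_rpow_neg_ne_top ((div_lt_one hp0).2 hp))
      (ENNReal.rpow_ne_top_of_nonneg hp1 measure_ball_lt_top.ne))
      (ENNReal.rpow_ne_top_of_nonneg (by positivity) henergy)
  set M := ‖v 0‖ₑ * μ (ball 0 1) + K
  have hM : M ≠ ⊤ :=
    ENNReal.add_ne_top.2 ⟨ENNReal.mul_ne_top enorm_ne_top measure_ball_lt_top.ne, hK⟩
  refine ⟨M.toReal, fun R hR => ?_⟩
  have hR0 : 0 ≤ R := zero_le_one.trans hR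
  have hbound : ∫⁻ x in ball 0 R, ‖v x‖ₑ ∂μ ≤ M * ENNReal.ofReal R ^ s :=
    calc ∫⁻ x in ball 0 R, ‖v x‖ₑ ∂μ ≤ ∫⁻ x in ball 0 R, ‖v 0‖ₑ + ‖v x - v 0‖ₑ ∂μ :=
          lintegral_mono fun x => by simpa using enorm_add_le (v 0) (v x - v 0)
      _ = ‖v 0‖ₑ * μ (ball 0 R) + ∫⁻ x in ball 0 R, ‖v x - v 0‖ₑ ∂μ := by
          rw [lintegral_add_left measurable_const, setLIntegral_const]
      _ ≤ ‖v 0‖ₑ * (ENNReal.ofReal R ^ s * μ (ball 0 1)) + K * ENNReal.ofReal R ^ s := by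
          gcongr
          · rw [Measure.addHaar_ball μ 0 hR0, ENNReal.ofReal_pow hR0, ← ENNReal.rpow_natCast]
            gcongr
            exact ENNReal.one_le_ofReal.2 hR
          · exact setLIntegral_ball_enorm_sub_le μ (by linarith) hv hR0
      _ = M * ENNReal.ofReal R ^ s := by ring
  rw [integral_norm_eq_lintegral_enorm hv.continuous.aestronglyMeasurable]
  refine ENNReal.toReal_le_of_le_ofReal (by positivity) (hbound.trans_eq ?_)
  rw [ENNReal.ofReal_mul ENNReal.toReal_nonneg, ENNReal.ofReal_toReal hM,
    ENNReal.ofReal_rpow_of_nonneg hR0 (by linarith)]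

end Haar

/-- if `v ∈ C¹(ℝ²)` and `∫_{ℝ²} |∇v|^p dx < ∞` for some
`p ∈ (2,∞)`, then `limsup_{R→∞} R^{-(3-2/p)} ∫_{B_R(0)} |v| dx < ∞`. -/
theorem mean_growth_super (p : ℝ) (hp : 2 < p)
    (v : Plane → ℝ) (hv : ContDiff ℝ 1 v)
    (henergy : ∫⁻ x : Plane, ENNReal.ofReal (‖fderiv ℝ v x‖ ^ p) < ⊤) :
    ∃ C R₀ : ℝ, ∀ R : ℝ, R₀ ≤ R →
      R ^ (-(3 - 2 / p)) * (∫ x in Metric.ball (0 : Plane) R, |v x|) ≤ C := by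
  have hdim : (finrank ℝ Plane : ℝ) = 2 := by simp
  have henergy' : ∫⁻ x : Plane, ‖fderiv ℝ v x‖ₑ ^ p ≠ ⊤ := by
    simpa only [← ofReal_norm, ENNReal.ofReal_rpow_of_nonneg (norm_nonneg _)
      (by linarith : (0 : ℝ) ≤ p)] using henergy.ne
  obtain ⟨C, hC⟩ := exists_integral_ball_norm_le_mul_rpow volume (hdim ▸ hp) hv henergy'
  refine ⟨C, 1, fun R hR => ?_⟩
  have hR0 : 0 < R := zero_lt_one.trans_le hR
  have hs : 1 + (finrank ℝ Plane : ℝ) * (1 - 1 / p) = 3 - 2 / p := by rw [hdim]; ring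
  calc R ^ (-(3 - 2 / p)) * ∫ x in ball (0 : Plane) R, |v x|
      ≤ R ^ (-(3 - 2 / p)) * (C * R ^ (3 - 2 / p)) := by
        gcongr
        simpa only [Real.norm_eq_abs, hs] using hC R hR
    _ = C := by
        rw [Real.rpow_neg hR0.le]
        field_simp
end
end
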